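/- In the iterative inner-approximation algorithm, suppose at iteration c with sample set S_c the lower-bound problem min_{x∈G} f(x) + φ̂(x | S_c) has optimal solution z*, S_{c+1} = S_c ∪ {z*} and φ̂(z* | S_{c+1}) = φ(z*). If z* is again optimal for min_{x∈G} f(x) + φ̂(x | S_{c+1}), then z* is a global optimum of the original problem min_{x∈G} f(x) + φ(x). -/

import Mathlib

theorem stmt9_general (n : ℕ) (G : Set (EuclideanSpace ℝ (Fin n)))
    (f φ hat₂ : EuclideanSpace ℝ (Fin n) → ℝ)
    (zstar : EuclideanSpace ℝ (Fin n))
    (hle : ∀ x ∈ G, hat₂ x ≤ φ x)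
    (hexact : hat₂ zstar = φ zstar)
    (hopt₂ : ∀ x ∈ G, f zstar + hat₂ zstar ≤ f x + hat₂ x) :
    ∀ x ∈ G, f zstar + φ zstar ≤ f x + φ x := by
  intro x hx
  calc f zstar + φ zstar = f zstar + hat₂ zstar := by rw [hexact]
    _ ≤ f x + hat₂ x := hopt₂ x hx
    _ ≤ f x + φ x := by gcongr; exact hle x hx

/-- If two consecutive iterations give the same solution, it is a global
optimum of the original problem. -/
theorem stmt9 (n : ℕ) (G : Set (EuclideanSpace ℝ (Fin n)))
    (f φ hat₁ hat₂ : EuclideanSpace ℝ (Fin n) → ℝ)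
    (zstar : EuclideanSpace ℝ (Fin n)) (hz : zstar ∈ G)
    (hle : ∀ x ∈ G, hat₂ x ≤ φ x)
    (hopt₁ : ∀ x ∈ G, f zstar + hat₁ zstar ≤ f x + hat₁ x)
    (hexact : hat₂ zstar = φ zstar)
    (hopt₂ : ∀ x ∈ G, f zstar + hat₂ zstar ≤ f x + hat₂ x) :
    ∀ x ∈ G, f zstar + φ zstar ≤ f x + φ x :=
  stmt9_general n G f φ hat₂ zstar hle hexact hopt₂
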